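/- Let B ∈ C^{n×n} with B_H ≥ 0, B_A anti-Hermitian, and define iterated commutators C₀ := √B_H, C_{j+1} := C_j B_A − B_A C_j. For every m ∈ ℕ₀, the range of [√B_H, B_A √B_H, …, B_A^m √B_H] equals the range of [C₀, C₁, …, C_m]. -/

import Mathlib

/-!
Write `Vⱼ` for the range of `B_A^j √B_H`, respectively of `C_j`. In both cases
`B_A Vⱼ ≤ Vⱼ + Vⱼ₊₁` and `Vⱼ₊₁ ≤ Vⱼ + B_A Vⱼ`: for the commutators because
`B_A C_j = C_j B_A - C_{j+1}` and `range (C_j B_A) ≤ range C_j`. These two inclusions force the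
partial sums `Wⱼ = V₀ + ⋯ + Vⱼ` to obey `Wⱼ₊₁ = Wⱼ + B_A Wⱼ`, so both chains are determined by
`V₀ = range √B_H`.
-/

open Matrix
open scoped ComplexOrder

/-- The square root of a positive semidefinite matrix (removed from Mathlib; old definition). -/
noncomputable def Matrix.PosSemidef.sqrt {n : Type*} [Fintype n] [DecidableEq n]
    {A : Matrix n n ℂ} (hA : A.PosSemidef) : Matrix n n ℂ :=
  hA.1.eigenvectorUnitary.1 * diagonal ((↑) ∘ (Real.sqrt ∘ hA.1.eigenvalues)) *
  (star hA.1.eigenvectorUnitary : Matrix n n ℂ)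

/-- The iterated commutators `C₀ = √B_H`, `C_{j+1} = C_j B_A - B_A C_j`. -/
noncomputable def commSeq {n : ℕ} (S BA : Matrix (Fin n) (Fin n) ℂ) :
    ℕ → Matrix (Fin n) (Fin n) ℂ
  | 0 => S
  | j + 1 => commSeq S BA j * BA - BA * commSeq S BA j

theorem iSup_fin_succ_eq_partialSups {α : Type*} [CompleteLattice α] (f : ℕ → α) (m : ℕ) :
    ⨆ j : Fin (m + 1), f j = partialSups f m :=
  le_antisymm (iSup_le fun j => le_partialSups_of_le f (Nat.lt_succ_iff.mp j.2))
    (partialSups_le _ _ _ fun k hk => le_iSup_of_le ⟨k, Nat.lt_succ_of_le hk⟩ le_rfl)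

namespace LinearMap

variable {R M : Type*} [Semiring R] [AddCommGroup M] [Module R M]

theorem range_sub_le {M₂ : Type*} [AddCommGroup M₂] [Module R M₂] (f g : M →ₗ[R] M₂) :
    range (f - g) ≤ range f ⊔ range g := by
  rintro _ ⟨x, rfl⟩
  rw [sub_apply, sub_eq_add_neg, ← map_neg]
  exact Submodule.add_mem_sup (mem_range_self f x) (mem_range_self g (-x))

theorem range_mul_eq_map (f g : Module.End R M) : range (f * g) = (range g).map f :=
  range_comp g f

theorem range_mul_le_left (f g : Module.End R M) : range (f * g) ≤ range f :=
  range_comp_le_range g f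

end LinearMap

namespace Submodule

variable {R M : Type*} [Semiring R] [AddCommGroup M] [Module R M]
  {a : Module.End R M} {V : ℕ → Submodule R M}

theorem map_partialSups_le_partialSups_succ (hmap : ∀ k, (V k).map a ≤ V k ⊔ V (k + 1))
    (j : ℕ) : (partialSups V j).map a ≤ partialSups V (j + 1) :=
  map_le_iff_le_comap.mpr <| partialSups_le _ _ _ fun k hk => map_le_iff_le_comap.mp <|
    (hmap k).trans <| sup_le (le_partialSups_of_le V (by omega)) (le_partialSups_of_le V (by omega))

theorem partialSups_succ_eq_sup_map (hmap : ∀ k, (V k).map a ≤ V k ⊔ V (k + 1))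
    (hsucc : ∀ k, V (k + 1) ≤ V k ⊔ (V k).map a) (j : ℕ) :
    partialSups V (j + 1) = partialSups V j ⊔ (partialSups V j).map a := by
  refine le_antisymm ?_ (sup_le ((partialSups V).monotone (Nat.le_succ j))
    (map_partialSups_le_partialSups_succ hmap j))
  rw [← Order.succ_eq_add_one, partialSups_succ]
  exact sup_le le_sup_left <| (hsucc j).trans <|
    sup_le_sup (le_partialSups V j) (map_mono (le_partialSups V j))

theorem partialSups_eq_partialSups_of_map_le {W : ℕ → Submodule R M} (h₀ : V 0 = W 0)
    (hmapV : ∀ k, (V k).map a ≤ V k ⊔ V (k + 1)) (hsuccV : ∀ k, V (k + 1) ≤ V k ⊔ (V k).map a)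
    (hmapW : ∀ k, (W k).map a ≤ W k ⊔ W (k + 1)) (hsuccW : ∀ k, W (k + 1) ≤ W k ⊔ (W k).map a) :
    partialSups V = partialSups W := by
  ext1
  funext j
  induction j with
  | zero => simp only [partialSups_zero, h₀]
  | succ j ih =>
    rw [partialSups_succ_eq_sup_map hmapV hsuccV, partialSups_succ_eq_sup_map hmapW hsuccW, ih]

end Submodule

namespace Module.End

open LinearMap Submodule

variable {R M : Type*} [Semiring R] [AddCommGroup M] [Module R M]

theorem map_range_pow_mul (a s : Module.End R M) (k : ℕ) :
    (range (a ^ k * s)).map a = range (a ^ (k + 1) * s) := by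
  rw [← range_mul_eq_map, pow_succ', mul_assoc]

theorem partialSups_range_pow_mul_eq_of_commutator {a s : Module.End R M} {C : ℕ → Module.End R M}
    (h₀ : C 0 = s) (hC : ∀ k, C (k + 1) = C k * a - a * C k) :
    partialSups (fun k => range (a ^ k * s)) = partialSups (fun k => range (C k)) := by
  have hmapC (k : ℕ) : (range (C k)).map a ≤ range (C k) ⊔ range (C (k + 1)) := by
    rw [← range_mul_eq_map, show a * C k = C k * a - C (k + 1) by rw [hC, sub_sub_cancel]]
    exact (range_sub_le _ _).trans (sup_le_sup_right (range_mul_le_left _ _) _)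
  have hsuccC (k : ℕ) : range (C (k + 1)) ≤ range (C k) ⊔ (range (C k)).map a := by
    rw [hC, ← range_mul_eq_map]
    exact (range_sub_le _ _).trans (sup_le_sup_right (range_mul_le_left _ _) _)
  refine partialSups_eq_partialSups_of_map_le (by simp [h₀]) (fun k => ?_) (fun k => ?_)
    hmapC hsuccC
  · exact (map_range_pow_mul a s k).le.trans le_sup_right
  · exact (map_range_pow_mul a s k).ge.trans le_sup_right

end Module.End

/-- The range of `[√B_H, B_A √B_H, …, B_A^m √B_H]` equals the range of the
iterated commutators `[C₀, C₁, …, C_m]`. -/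
theorem kalman_range_BA_eq_range_commutators {n : ℕ} (B : Matrix (Fin n) (Fin n) ℂ)
    (hBH : ((1/2 : ℂ) • (B + Bᴴ)).PosSemidef) (m : ℕ) :
    (⨆ j : Fin (m+1),
        LinearMap.range ((((1/2 : ℂ) • (B - Bᴴ)) ^ (j : ℕ) * hBH.sqrt).mulVecLin))
      = ⨆ j : Fin (m+1),
        LinearMap.range ((commSeq hBH.sqrt ((1/2 : ℂ) • (B - Bᴴ)) (j : ℕ)).mulVecLin) := by
  set S := hBH.sqrt
  set BA := (1/2 : ℂ) • (B - Bᴴ)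
  have hKrylov := Module.End.partialSups_range_pow_mul_eq_of_commutator
    (a := toLinAlgEquiv' BA) (s := toLinAlgEquiv' S)
    (C := fun k => toLinAlgEquiv' (commSeq S BA k)) rfl
    (fun k => by simp only [commSeq, map_sub, map_mul])
  simp only [← map_pow, ← map_mul] at hKrylov
  rw [iSup_fin_succ_eq_partialSups (fun j => LinearMap.range (BA ^ j * S).mulVecLin),
    iSup_fin_succ_eq_partialSups (fun j => LinearMap.range (commSeq S BA j).mulVecLin)]
  exact congrArg (· m) hKrylov
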